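/- arXiv:2501.06883 — 2 statements merged into one kernel-verified Lean document; each statement's English description precedes it below -/
import Mathlib

section
/- Let p be a prime and let g(x) = b_e x^e + b_{e-1} x^{e-1} + ⋯ + b_0 ∈ ℚ[x] have degree e ≥ 1 with b_0 ≠ 0, ν_p(b_e) = 0, and ν_p(b_i) ≥ 1 for every 0 ≤ i ≤ e−1 with b_i ≠ 0. Suppose NP_p(g) has successive vertices (0,0), (e−m_1, ν_p(b_{m_1})), …, (e−m_{t−1}, ν_p(b_{m_{t−1}})), (e, ν_p(b_0)), where e = m_0 > m_1 > ⋯ > m_t = 0, and set λ_i = (ν_p(b_{m_i}) − ν_p(b_{m_{i−1}}))/(m_{i−1} − m_i) for 1 ≤ i ≤ t. Let f(x) = a_d x^d + ⋯ + a_0 ∈ ℚ[x] have degree d ≥ 1 with ν_p(a_d) = 0, and let λ = min{ ν_p(a_i)/(d−i) : 0 ≤ i < d, a_i ≠ 0 } be the slope of the first edge of NP_p(f). Assume λ ≥ λ_1 and that one of the following holds: (i) ν_p(b_0) < λ_1(d+e−1); (ii) ν_p(b_0) = λ_1(d+e−1) and moreover either f(0) = 0, or ν_p(f(0)) > dλ,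 or λ > λ_1. Then for every integer n ≥ 1, the Newton polygon NP_p(g(f^n(x))) of the composition g ∘ f^n has successive vertices (0,0), (d^n(e−m_1), ν_p(b_{m_1})), …, (d^n(e−m_{t−1}), ν_p(b_{m_{t−1}})), (d^n e, ν_p(b_0)). -/
/-!
For a slope `ρ`, the weighted valuation `w_ρ(H) = min_k (ν(H_k) + ρ k)` is the valuation of `H(x)`
at a generic `x` with `ν(x) = ρ`; it is additive on products, so `w_ρ(g ∘ H) ≥ w_σ(g)` whenever
`w_ρ(H) ≥ σ`. An edge of slope `σ` of `NP_p(g)` is a supporting line, i.e. a bound `w_σ(g) ≥ c`.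
The first slope of `NP_p(f)` gives `w_λ(f) ≥ λ d`, hence `w_{λd/d^n}(f^n) ≥ λ d`, and all edge
slopes `σ_s` of `NP_p(g)` are at most `λ_1 d ≤ λ d` (the case hypotheses bound the last one). So
every supporting line of `NP_p(g)` pulls back to one of `NP_p(g ∘ f^n)` of slope `σ_s / d^n`. At
the stretched vertex `d^n m_s` the term `b_{m_s} lc(f^n)^{m_s}` strictly dominates the others: for
`s < t` because `σ_s < λ d`, and at the constant term because `ν(f^n(0)) > σ_t`; in case (ii) with
`ν(f(0)) > dλ` this holds because `{x : ν(x) ≥ c}` is `f`-stable for `c > dλ`.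
-/

open Polynomial

/-- The `n`-th compositional iterate of `f`: `f^0 = X`, `f^{n+1} = f ∘ f^n`. -/
noncomputable def polyIter (f : Polynomial ℚ) : ℕ → Polynomial ℚ
  | 0 => Polynomial.X
  | n + 1 => f.comp (polyIter f n)

/-- The `p`-adic valuation of a rational number, viewed as a rational number. -/
def nuQ (p : ℕ) (x : ℚ) : ℚ := (padicValRat p x : ℚ)

/-- `NP_p(h)` has successive vertices `(xs 0, ys 0), …, (xs t, ys t)`:
the corresponding coefficients are nonzero and have the prescribed valuations,
the slopes are strictly increasing, and every point of the Newton diagram lies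
on or above the polygon. -/
def HasNPVertices (p : ℕ) (h : Polynomial ℚ) (t : ℕ) (xs : ℕ → ℕ) (ys : ℕ → ℚ) : Prop :=
  h.coeff 0 ≠ 0 ∧
  xs 0 = 0 ∧ xs t = h.natDegree ∧
  (∀ s, s < t → xs s < xs (s + 1)) ∧
  (∀ s, s ≤ t → h.coeff (h.natDegree - xs s) ≠ 0 ∧
      nuQ p (h.coeff (h.natDegree - xs s)) = ys s) ∧
  (∀ s, 1 ≤ s → s < t →
      (ys s - ys (s - 1)) / ((xs s : ℚ) - (xs (s - 1) : ℚ)) <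
        (ys (s + 1) - ys s) / ((xs (s + 1) : ℚ) - (xs s : ℚ))) ∧
  (∀ s, 1 ≤ s → s ≤ t → ∀ i, h.coeff i ≠ 0 →
      xs (s - 1) ≤ h.natDegree - i → h.natDegree - i ≤ xs s →
      ys (s - 1) + ((ys s - ys (s - 1)) / ((xs s : ℚ) - (xs (s - 1) : ℚ))) *
          (((h.natDegree - i : ℕ) : ℚ) - (xs (s - 1) : ℚ)) ≤ nuQ p (h.coeff i))

/-- The number of irreducible factors of a polynomial over `ℚ`,
counted with multiplicity. -/
noncomputable def numFactors (P : Polynomial ℚ) : ℕ :=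
  (UniqueFactorizationMonoid.factors P).card

/-- `f` is `p^r`-pure. -/
def IsPpure (p r : ℕ) (f : Polynomial ℚ) : Prop :=
  f.coeff 0 ≠ 0 ∧
  padicValRat p f.leadingCoeff = 0 ∧
  padicValRat p (f.coeff 0) = (r : ℤ) ∧
  ∀ i, 0 < i → i < f.natDegree → f.coeff i ≠ 0 →
    (r : ℚ) / (f.natDegree : ℚ) ≤ nuQ p (f.coeff i) / ((f.natDegree : ℚ) - (i : ℚ))

section Valuation

lemma nuQ_add_one_le_of_lt {p : ℕ} {x y : ℚ} (h : nuQ p x < nuQ p y) : nuQ p x + 1 ≤ nuQ p y := by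
  unfold nuQ at *
  exact_mod_cast Int.add_one_le_of_lt (by exact_mod_cast h)

variable {p : ℕ} [Fact p.Prime]

lemma nuQ_mul {x y : ℚ} (hx : x ≠ 0) (hy : y ≠ 0) : nuQ p (x * y) = nuQ p x + nuQ p y := by
  simp [nuQ, padicValRat.mul hx hy]

lemma nuQ_pow (x : ℚ) (k : ℕ) : nuQ p (x ^ k) = k * nuQ p x := by
  simp [nuQ, padicValRat.pow]

variable (p) in
def nuGe (c : ℚ) : AddSubgroup ℚ where
  carrier := {x | x ≠ 0 → c ≤ nuQ p x}
  zero_mem' h := (h rfl).elim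
  add_mem' {x y} hx hy hxy := by
    by_cases hx0 : x = 0
    · subst hx0; simpa using hy (by simpa using hxy)
    by_cases hy0 : y = 0
    · subst hy0; simpa using hx (by simpa using hxy)
    calc c ≤ min (nuQ p x) (nuQ p y) := le_min (hx hx0) (hy hy0)
      _ ≤ nuQ p (x + y) := by
        unfold nuQ; exact_mod_cast padicValRat.min_le_padicValRat_add hxy
  neg_mem' {x} hx h := by simpa [nuQ, padicValRat.neg] using hx (neg_ne_zero.mp h)

lemma nuGe_anti {c c' : ℚ} (h : c' ≤ c) : nuGe p c ≤ nuGe p c' :=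
  fun _ hx hx0 => h.trans (hx hx0)

lemma mul_mem_nuGe {a b x y : ℚ} (hx : x ∈ nuGe p a) (hy : y ∈ nuGe p b) :
    x * y ∈ nuGe p (a + b) := by
  intro hxy
  obtain ⟨hx0, hy0⟩ := mul_ne_zero_iff.mp hxy
  rw [nuQ_mul hx0 hy0]
  exact add_le_add (hx hx0) (hy hy0)

lemma add_ne_zero_and_nuQ_add_eq {x y : ℚ} (hx : x ≠ 0) (hy : y ∈ nuGe p (nuQ p x + 1)) :
    x + y ≠ 0 ∧ nuQ p (x + y) = nuQ p x := by
  by_cases hy0 : y = 0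
  · simp [hy0, hx]
  have hlt : padicValRat p x < padicValRat p y := by
    have := hy hy0; unfold nuQ at this; exact_mod_cast (lt_add_one _).trans_le this
  have hxy : x + y ≠ 0 := by
    intro h
    rw [eq_neg_of_add_eq_zero_right h, padicValRat.neg] at hlt
    exact lt_irrefl _ hlt
  exact ⟨hxy, by simp [nuQ, padicValRat.add_eq_of_lt hxy hx hy0 hlt]⟩

end Valuation

section WeightedValuation

variable {p : ℕ} [Fact p.Prime]

variable (p) in
/-- `H ∈ weightedNuGe p ρ c` means `ν(H_k) + ρ k ≥ c` for every `k`: the valuation of `H(x)` is at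
least `c` at a generic point `x` with `ν(x) = ρ`. -/
def weightedNuGe (ρ c : ℚ) : AddSubgroup ℚ[X] where
  carrier := {H | ∀ k : ℕ, H.coeff k ∈ nuGe p (c - ρ * k)}
  zero_mem' k := by rw [coeff_zero]; exact zero_mem _
  add_mem' hG hH k := by simpa using add_mem (hG k) (hH k)
  neg_mem' hH k := by simpa using neg_mem (hH k)

variable {ρ σ c : ℚ} {f G H : ℚ[X]}

lemma C_mem_weightedNuGe_iff {x : ℚ} : C x ∈ weightedNuGe p ρ c ↔ x ∈ nuGe p c := by
  refine ⟨fun h => by simpa using h 0, fun h k => ?_⟩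
  rcases eq_or_ne k 0 with rfl | hk
  · simpa using h
  · simp [coeff_C, hk, zero_mem]

lemma X_mem_weightedNuGe : (X : ℚ[X]) ∈ weightedNuGe p ρ ρ := by
  intro k hk
  rcases eq_or_ne k 1 with rfl | hk1
  · simp [nuQ]
  · exact absurd (coeff_X_of_ne_one hk1) hk

lemma mul_mem_weightedNuGe {a b : ℚ} (hG : G ∈ weightedNuGe p ρ a)
    (hH : H ∈ weightedNuGe p ρ b) : G * H ∈ weightedNuGe p ρ (a + b) := by
  intro k
  rw [coeff_mul]
  refine sum_mem fun x hx => ?_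
  have := mul_mem_nuGe (hG x.1) (hH x.2)
  rwa [← Finset.HasAntidiagonal.mem_antidiagonal.mp hx, Nat.cast_add,
    show a + b - ρ * (x.1 + x.2) = a - ρ * x.1 + (b - ρ * x.2) by ring]

lemma pow_mem_weightedNuGe (hH : H ∈ weightedNuGe p ρ c) (n : ℕ) :
    H ^ n ∈ weightedNuGe p ρ (n * c) := by
  induction n with
  | zero =>
    rw [pow_zero, Nat.cast_zero, zero_mul, ← C_1]
    exact C_mem_weightedNuGe_iff.mpr fun _ => by simp [nuQ]
  | succ n ih => simpa [pow_succ, add_mul] using mul_mem_weightedNuGe ih hH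

lemma comp_mem_weightedNuGe (hH : H ∈ weightedNuGe p ρ σ)
    (hf : f ∈ weightedNuGe p σ c) : f.comp H ∈ weightedNuGe p ρ c := by
  rw [comp_eq_sum_left, Polynomial.sum_def]
  refine sum_mem fun i _ => ?_
  have := mul_mem_weightedNuGe (C_mem_weightedNuGe_iff.mpr (hf i)) (pow_mem_weightedNuGe hH i)
  rwa [show c - σ * i + i * σ = c by ring] at this

lemma mem_weightedNuGe_of_le {D : ℕ} {ρ' : ℚ} (hdeg : H.natDegree ≤ D)
    (hH : H ∈ weightedNuGe p ρ (ρ * D)) (hρ : ρ' ≤ ρ) : H ∈ weightedNuGe p ρ' (ρ' * D) := by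
  intro k
  rcases le_or_gt k D with hk | hk
  · have : (k : ℚ) ≤ D := by exact_mod_cast hk
    exact nuGe_anti (by nlinarith) (hH k)
  · simp [coeff_eq_zero_of_natDegree_lt (hdeg.trans_lt hk), zero_mem]

lemma mem_weightedNuGe_of_le_div (hlc : nuQ p f.leadingCoeff = 0)
    (h : ∀ i < f.natDegree, f.coeff i ≠ 0 → ρ ≤ nuQ p (f.coeff i) / (f.natDegree - i)) :
    f ∈ weightedNuGe p ρ (ρ * f.natDegree) := by
  intro k hk
  rcases lt_trichotomy k f.natDegree with hlt | rfl | hgt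
  · have hpos : (0 : ℚ) < f.natDegree - k := sub_pos.mpr (by exact_mod_cast hlt)
    have := (le_div_iff₀ hpos).mp (h k hlt hk)
    linarith
  · simpa [sub_self] using hlc.ge
  · exact absurd (coeff_eq_zero_of_natDegree_lt hgt) hk

lemma mem_weightedNuGe_of_coeff_zero_mem (hf : f ∈ weightedNuGe p 0 0) (hc : 0 ≤ c)
    (h0 : f.coeff 0 ∈ nuGe p c) : f ∈ weightedNuGe p c c := by
  intro k
  rcases Nat.eq_zero_or_pos k with rfl | hk
  · simpa using h0
  · refine nuGe_anti ?_ (hf k)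
    have : (1 : ℚ) ≤ k := by exact_mod_cast hk
    nlinarith

end WeightedValuation

section Iterate

lemma natDegree_polyIter (f : ℚ[X]) (n : ℕ) : (polyIter f n).natDegree = f.natDegree ^ n := by
  induction n with
  | zero => simp [polyIter]
  | succ n ih => rw [polyIter, natDegree_comp, ih, pow_succ']

variable {p : ℕ} [Fact p.Prime] {f : ℚ[X]}

lemma nuQ_leadingCoeff_polyIter (hf : 0 < f.natDegree) (hlc : nuQ p f.leadingCoeff = 0)
    (n : ℕ) : nuQ p (polyIter f n).leadingCoeff = 0 := by
  induction n with
  | zero => simp [polyIter, nuQ]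
  | succ n ih =>
    have hdeg : (polyIter f n).natDegree ≠ 0 := by
      rw [natDegree_polyIter]; exact pow_ne_zero _ hf.ne'
    have hF : polyIter f n ≠ 0 := fun h => hdeg (by rw [h, natDegree_zero])
    rw [polyIter, leadingCoeff_comp hdeg,
      nuQ_mul (leadingCoeff_ne_zero.mpr (ne_zero_of_natDegree_gt hf))
        (pow_ne_zero _ (leadingCoeff_ne_zero.mpr hF)), nuQ_pow, hlc, ih]
    ring

lemma polyIter_mem_weightedNuGe (σ : ℕ → ℚ) (n : ℕ)
    (hf : ∀ j < n, f ∈ weightedNuGe p (σ j) (σ (j + 1))) :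
    polyIter f n ∈ weightedNuGe p (σ 0) (σ n) := by
  induction n with
  | zero => exact X_mem_weightedNuGe
  | succ n ih =>
    exact comp_mem_weightedNuGe (ih fun j hj => hf j (by omega)) (hf n (by omega))

lemma polyIter_mem_weightedNuGe_div {ρ : ℚ} (hf : 0 < f.natDegree) (hρ : 0 ≤ ρ)
    (hfW : f ∈ weightedNuGe p ρ (ρ * f.natDegree)) (n : ℕ) :
    polyIter f n ∈
      weightedNuGe p (ρ * f.natDegree / (polyIter f n).natDegree) (ρ * f.natDegree) := by
  rw [natDegree_polyIter, Nat.cast_pow]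
  have hd : (1 : ℚ) ≤ f.natDegree := by exact_mod_cast hf
  have hdn : (0 : ℚ) < (f.natDegree : ℚ) ^ n := by positivity
  have key := polyIter_mem_weightedNuGe (p := p) (f := f)
    (fun j => ρ * f.natDegree / f.natDegree ^ n * f.natDegree ^ j) n fun j hj => by
      have hle : ρ * f.natDegree / f.natDegree ^ n * f.natDegree ^ j ≤ ρ := by
        rw [div_mul_eq_mul_div, div_le_iff₀ hdn, mul_assoc, ← pow_succ']
        exact mul_le_mul_of_nonneg_left (pow_le_pow_right₀ hd hj) hρ
      simpa only [pow_succ, mul_assoc] using mem_weightedNuGe_of_le le_rfl hfW hle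
  simpa [hdn.ne'] using key

lemma coeff_zero_polyIter_mem_nuGe {c : ℚ} (hf : f ∈ weightedNuGe p 0 0) (hc : 0 ≤ c)
    (h0 : f.coeff 0 ∈ nuGe p c) (n : ℕ) : (polyIter f n).coeff 0 ∈ nuGe p c := by
  simpa using polyIter_mem_weightedNuGe (fun _ => c) n
    (fun _ _ => mem_weightedNuGe_of_coeff_zero_mem hf hc h0) 0

lemma lt_nuQ_coeff_zero_polyIter {ρ σ : ℚ} (hf : 0 < f.natDegree) (hρ : 0 ≤ ρ)
    (hfW : f ∈ weightedNuGe p ρ (ρ * f.natDegree))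
    (h : σ < ρ * f.natDegree ∨ σ ≤ ρ * f.natDegree ∧
      (f.coeff 0 = 0 ∨ ρ * f.natDegree < nuQ p (f.coeff 0)))
    (n : ℕ) (hF0 : (polyIter f n).coeff 0 ≠ 0) : σ < nuQ p ((polyIter f n).coeff 0) := by
  rcases h with hlt | ⟨hle, h0⟩
  · exact hlt.trans_le (by simpa using polyIter_mem_weightedNuGe_div hf hρ hfW n 0 hF0)
  have hint : f ∈ weightedNuGe p 0 0 := by simpa using mem_weightedNuGe_of_le le_rfl hfW hρ
  obtain ⟨c, hc, hc0⟩ : ∃ c, ρ * f.natDegree < c ∧ f.coeff 0 ∈ nuGe p c :=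
    h0.elim (fun h => ⟨_, lt_add_one _, fun h' => absurd h h'⟩) (fun h => ⟨_, h, fun _ => le_rfl⟩)
  have hdc : 0 ≤ c := (mul_nonneg hρ (Nat.cast_nonneg _)).trans hc.le
  exact hle.trans_lt (hc.trans_le (coeff_zero_polyIter_mem_nuGe hint hdc hc0 n hF0))

end Iterate

section Geometry

def npSlope (xs : ℕ → ℕ) (ys : ℕ → ℚ) (s : ℕ) : ℚ :=
  (ys s - ys (s - 1)) / ((xs s : ℚ) - (xs (s - 1) : ℚ))

def npLine (xs : ℕ → ℕ) (ys : ℕ → ℚ) (s : ℕ) (z : ℚ) : ℚ :=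
  ys (s - 1) + npSlope xs ys s * (z - xs (s - 1))

variable {xs : ℕ → ℕ} {ys : ℕ → ℚ} {t s : ℕ}

lemma npLine_sub (s : ℕ) (z k : ℚ) :
    npLine xs ys s (z - k) = npLine xs ys s z - npSlope xs ys s * k := by
  unfold npLine; ring

lemma npLine_eq (h : xs (s - 1) ≠ xs s) (z : ℚ) :
    npLine xs ys s z = ys s + npSlope xs ys s * (z - xs s) := by
  have h' : (xs s : ℚ) - xs (s - 1) ≠ 0 := sub_ne_zero.mpr (by exact_mod_cast h.symm)
  unfold npLine npSlope
  field_simp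
  ring

lemma npSlope_mul (D : ℕ) (s : ℕ) :
    npSlope (fun s => D * xs s) ys s = npSlope xs ys s / D := by
  simp only [npSlope, Nat.cast_mul, ← mul_sub, div_div, mul_comm]

lemma npLine_mul {D : ℕ} (hD : D ≠ 0) (s : ℕ) (z : ℚ) :
    npLine (fun s => D * xs s) ys s (D * z) = npLine xs ys s z := by
  have : (D : ℚ) ≠ 0 := by exact_mod_cast hD
  simp only [npLine, npSlope_mul, Nat.cast_mul]
  field_simp

lemma npLine_succ_sub_npLine (h : xs (s - 1) ≠ xs s) (z : ℚ) :
    npLine xs ys (s + 1) z - npLine xs ys s z =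
      (npSlope xs ys (s + 1) - npSlope xs ys s) * (z - xs s) := by
  rw [npLine_eq h]
  simp only [npLine, Nat.add_sub_cancel]
  ring

lemma npLine_le_npLine (hx : StrictMonoOn xs (Set.Iic t))
    (hσ : StrictMonoOn (npSlope xs ys) (Set.Icc 1 t)) {s' : ℕ} (hs : s ∈ Set.Icc 1 t)
    (hs' : s' ∈ Set.Icc 1 t) {z : ℚ} (hz₁ : xs (s' - 1) ≤ z) (hz₂ : z ≤ xs s') :
    npLine xs ys s z ≤ npLine xs ys s' z := by
  obtain ⟨hs1, hst⟩ := hs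
  obtain ⟨hs'1, hs't⟩ := hs'
  have hstep : ∀ a, 1 ≤ a → a < t →
      npLine xs ys (a + 1) z - npLine xs ys a z =
        (npSlope xs ys (a + 1) - npSlope xs ys a) * (z - xs a) ∧
      npSlope xs ys a < npSlope xs ys (a + 1) := fun a ha hat =>
    ⟨npLine_succ_sub_npLine (hx.injOn.ne (by simp; omega) (by simp; omega) (by omega)) z,
      hσ ⟨ha, hat.le⟩ ⟨by omega, hat⟩ (by omega)⟩
  have hxle : ∀ a b, a ≤ b → b ≤ t → (xs a : ℚ) ≤ xs b := fun a b hab hb => by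
    exact_mod_cast hx.monotoneOn (by simp; omega) (by simpa using hb) hab
  rcases le_total s s' with h | h
  · refine monotoneOn_of_le_add_one Set.ordConnected_Icc (f := fun a => npLine xs ys a z)
      (fun a _ ⟨ha1, _⟩ ⟨_, ha's'⟩ => ?_) ⟨hs1, h⟩ ⟨hs'1, le_rfl⟩ h
    obtain ⟨heq, hlt⟩ := hstep a ha1 (by omega)
    have := hxle a (s' - 1) (by omega) (by omega)
    nlinarith
  · refine antitoneOn_of_add_one_le Set.ordConnected_Icc (f := fun a => npLine xs ys a z)
      (fun a _ ⟨has', _⟩ ⟨_, ha't⟩ => ?_) ⟨le_rfl, hs't⟩ ⟨h, hst⟩ h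
    obtain ⟨heq, hlt⟩ := hstep a (hs'1.trans has') (by omega)
    have := hxle s' a has' (by omega)
    nlinarith

lemma exists_mem_npSegment {z : ℚ} (ht : 1 ≤ t) (hz₁ : (xs 0 : ℚ) ≤ z) (hz₂ : z ≤ xs t) :
    ∃ s ∈ Set.Icc 1 t, (xs (s - 1) : ℚ) ≤ z ∧ z ≤ xs s := by
  induction t with
  | zero => omega
  | succ t ih =>
    rcases Nat.eq_zero_or_pos t with rfl | ht'
    · exact ⟨1, ⟨le_rfl, le_rfl⟩, hz₁, hz₂⟩
    by_cases hzt : z ≤ xs t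
    · obtain ⟨s, hs, h⟩ := ih ht' hzt
      exact ⟨s, ⟨hs.1, hs.2.trans t.le_succ⟩, h⟩
    · exact ⟨t + 1, ⟨by omega, le_rfl⟩, le_of_lt (not_le.mp hzt), hz₂⟩

lemma npSlope_last_sub_le (hx : StrictMonoOn xs (Set.Iic t))
    (hσ : StrictMonoOn (npSlope xs ys) (Set.Icc 1 t)) (ht : 1 ≤ t) (hx0 : xs 0 = 0)
    (hy0 : ys 0 = 0) (hσ₁ : 0 ≤ npSlope xs ys 1) {d : ℚ} (hd : 1 ≤ d) :
    npSlope xs ys t - npSlope xs ys 1 * d ≤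
      (ys t - npSlope xs ys 1 * (d + xs t - 1)) / ((xs t : ℚ) - xs (t - 1)) := by
  have hM : (1 : ℚ) ≤ (xs t : ℚ) - xs (t - 1) := by
    have : xs (t - 1) < xs t := hx (by simp) (by simp) (by omega)
    have : ((xs (t - 1) + 1 : ℕ) : ℚ) ≤ xs t := by exact_mod_cast this
    push_cast at this
    linarith
  have hline := npLine_le_npLine (ys := ys) (z := xs (t - 1)) hx hσ ⟨le_rfl, ht⟩ ⟨ht, le_rfl⟩
    le_rfl (by exact_mod_cast hx.monotoneOn (by simp) (by simp) (by omega))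
  have hσt : npSlope xs ys t * ((xs t : ℚ) - xs (t - 1)) = ys t - ys (t - 1) := by
    unfold npSlope; field_simp
  simp only [npLine, Nat.sub_self, hx0, hy0, Nat.cast_zero, sub_zero, zero_add, sub_self,
    mul_zero, add_zero] at hline
  rw [le_div_iff₀ (by linarith)]
  nlinarith [mul_nonneg (mul_nonneg hσ₁ (sub_nonneg.mpr hd)) (sub_nonneg.mpr hM)]

end Geometry

namespace HasNPVertices

variable {p : ℕ} {h : ℚ[X]} {t s : ℕ} {xs : ℕ → ℕ} {ys : ℕ → ℚ}

lemma strictMonoOn_xs (hh : HasNPVertices p h t xs ys) : StrictMonoOn xs (Set.Iic t) :=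
  strictMonoOn_of_lt_add_one Set.ordConnected_Iic fun a _ _ ha' => hh.2.2.2.1 a (by simpa using ha')

lemma strictMonoOn_npSlope (hh : HasNPVertices p h t xs ys) :
    StrictMonoOn (npSlope xs ys) (Set.Icc 1 t) :=
  strictMonoOn_of_lt_add_one Set.ordConnected_Icc fun a _ ha ha' => hh.2.2.2.2.2.1 a ha.1 ha'.2

lemma xs_le_natDegree (hh : HasNPVertices p h t xs ys) (hs : s ≤ t) : xs s ≤ h.natDegree :=
  hh.2.2.1 ▸ hh.strictMonoOn_xs.monotoneOn (by simpa using hs) (by simp) hs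

lemma ys_zero (hh : HasNPVertices p h t xs ys) : ys 0 = nuQ p h.leadingCoeff := by
  rw [← (hh.2.2.2.2.1 0 t.zero_le).2, hh.2.1, Nat.sub_zero, leadingCoeff]

lemma ys_last (hh : HasNPVertices p h t xs ys) : ys t = nuQ p (h.coeff 0) := by
  rw [← (hh.2.2.2.2.1 t le_rfl).2, hh.2.2.1, Nat.sub_self]

lemma npSlope_one_pos (hh : HasNPVertices p h t xs ys) (ht : 1 ≤ t)
    (hlc : nuQ p h.leadingCoeff = 0)
    (hint : ∀ i < h.natDegree, h.coeff i ≠ 0 → 0 < nuQ p (h.coeff i)) :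
    0 < npSlope xs ys 1 := by
  have h01 : xs 0 < xs 1 := hh.2.2.2.1 0 ht
  have hx1 := hh.xs_le_natDegree ht
  obtain ⟨hc, hν⟩ := hh.2.2.2.2.1 1 ht
  have hpos := hint _ (by omega) hc
  rw [npSlope, Nat.sub_self, hh.ys_zero, hlc, sub_zero, ← hν]
  exact div_pos hpos (sub_pos.mpr (by exact_mod_cast h01))

lemma npSlope_last_le (hh : HasNPVertices p h t xs ys) (ht : 1 ≤ t)
    (hlc : nuQ p h.leadingCoeff = 0) (hσ₁ : 0 ≤ npSlope xs ys 1) {d : ℚ} (hd : 1 ≤ d)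
    (h0 : nuQ p (h.coeff 0) ≤ npSlope xs ys 1 * (d + h.natDegree - 1)) :
    npSlope xs ys t ≤ npSlope xs ys 1 * d := by
  have hM : (xs (t - 1) : ℚ) ≤ xs t := by
    exact_mod_cast hh.strictMonoOn_xs.monotoneOn (by simp) (by simp) (by omega)
  have := npSlope_last_sub_le hh.strictMonoOn_xs hh.strictMonoOn_npSlope ht hh.2.1
    (hh.ys_zero.trans hlc) hσ₁ hd
  rw [hh.ys_last, hh.2.2.1] at this
  rw [hh.2.2.1] at hM
  linarith [div_nonpos_of_nonpos_of_nonneg (sub_nonpos.mpr h0) (sub_nonneg.mpr hM)]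

lemma npSlope_last_lt (hh : HasNPVertices p h t xs ys) (ht : 1 ≤ t)
    (hlc : nuQ p h.leadingCoeff = 0) (hσ₁ : 0 ≤ npSlope xs ys 1) {d : ℚ} (hd : 1 ≤ d)
    (h0 : nuQ p (h.coeff 0) < npSlope xs ys 1 * (d + h.natDegree - 1)) :
    npSlope xs ys t < npSlope xs ys 1 * d := by
  have hM : (xs (t - 1) : ℚ) < xs t := by
    exact_mod_cast hh.strictMonoOn_xs (by simp) (by simp) (by omega)
  have := npSlope_last_sub_le hh.strictMonoOn_xs hh.strictMonoOn_npSlope ht hh.2.1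
    (hh.ys_zero.trans hlc) hσ₁ hd
  rw [hh.ys_last, hh.2.2.1] at this
  rw [hh.2.2.1] at hM
  linarith [div_neg_of_neg_of_pos (sub_neg.mpr h0) (sub_pos.mpr hM)]

variable [Fact p.Prime]

lemma mem_weightedNuGe (hh : HasNPVertices p h t xs ys) (hs : s ∈ Set.Icc 1 t) :
    h ∈ weightedNuGe p (npSlope xs ys s) (npLine xs ys s h.natDegree) := by
  obtain ⟨-, hx0, hxt, -, -, -, hbelow⟩ := id hh
  intro k hk
  have hkd : k ≤ h.natDegree := le_natDegree_of_ne_zero hk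
  have hz : ((h.natDegree - k : ℕ) : ℚ) = h.natDegree - k := Nat.cast_sub hkd
  obtain ⟨s', hs', hz₁, hz₂⟩ := exists_mem_npSegment (xs := xs) (z := (h.natDegree - k : ℕ))
    (hs.1.trans hs.2) (by simp [hx0]) (by rw [hxt]; exact_mod_cast Nat.sub_le _ _)
  rw [← npLine_sub, ← hz]
  exact (npLine_le_npLine hh.strictMonoOn_xs hh.strictMonoOn_npSlope hs hs' hz₁ hz₂).trans
    (hbelow s' hs'.1 hs'.2 k hk (by exact_mod_cast hz₁) (by exact_mod_cast hz₂))

end HasNPVertices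

lemma hasNPVertices_of_mem_weightedNuGe {p : ℕ} [Fact p.Prime] {h : ℚ[X]} {t : ℕ}
    {xs : ℕ → ℕ} {ys : ℕ → ℚ} (h0 : h.coeff 0 ≠ 0) (hx0 : xs 0 = 0) (hxt : xs t = h.natDegree)
    (hx : ∀ s < t, xs s < xs (s + 1))
    (hv : ∀ s ≤ t, h.coeff (h.natDegree - xs s) ≠ 0 ∧
      nuQ p (h.coeff (h.natDegree - xs s)) = ys s)
    (hσ : ∀ s, 1 ≤ s → s < t → npSlope xs ys s < npSlope xs ys (s + 1))
    (hW : ∀ s, 1 ≤ s → s ≤ t →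
      h ∈ weightedNuGe p (npSlope xs ys s) (npLine xs ys s h.natDegree)) :
    HasNPVertices p h t xs ys := by
  refine ⟨h0, hx0, hxt, hx, hv, hσ, fun s hs1 hst k hk _ _ => ?_⟩
  have := hW s hs1 hst k hk
  rwa [← npLine_sub, ← Nat.cast_sub (le_natDegree_of_ne_zero hk)] at this

section Composition

variable {p : ℕ} [Fact p.Prime] {F : ℚ[X]} {κ σ : ℚ} {i : ℕ}

lemma lt_nuQ_coeff_pow_of_lt (hF : 0 < F.natDegree)
    (hFW : F ∈ weightedNuGe p (κ / F.natDegree) κ) (hσ : σ < κ) {m : ℕ} (hmi : m < i)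
    (hc : (F ^ i).coeff (m * F.natDegree) ≠ 0) :
    σ * (i - m) < nuQ p ((F ^ i).coeff (m * F.natDegree)) := by
  have hbound := pow_mem_weightedNuGe hFW i (m * F.natDegree) hc
  have hD : (F.natDegree : ℚ) ≠ 0 := by exact_mod_cast hF.ne'
  have hmi' : (m : ℚ) < i := by exact_mod_cast hmi
  rw [Nat.cast_mul, show κ / F.natDegree * (m * F.natDegree) = κ * m by field_simp] at hbound
  nlinarith

lemma lt_nuQ_coeff_zero_pow (hF0 : F.coeff 0 ≠ 0 → σ < nuQ p (F.coeff 0)) (hi : 0 < i)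
    (hc : (F ^ i).coeff 0 ≠ 0) : σ * i < nuQ p ((F ^ i).coeff 0) := by
  rw [coeff_zero_eq_eval_zero, eval_pow, ← coeff_zero_eq_eval_zero] at hc ⊢
  have hi' : (0 : ℚ) < i := by exact_mod_cast hi
  rw [nuQ_pow, mul_comm]
  exact mul_lt_mul_of_pos_left (hF0 (ne_zero_pow hi.ne' hc)) hi'

namespace HasNPVertices

variable {g : ℚ[X]} {t s : ℕ} {xs : ℕ → ℕ} {ys : ℕ → ℚ}

/-- A bound `ys s + 1` rather than `> ys s`: valuations are integers. -/
lemma coeff_mul_coeff_pow_mem_nuGe (hg : HasNPVertices p g t xs ys) (hF : 0 < F.natDegree)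
    (hFW : F ∈ weightedNuGe p (κ / F.natDegree) κ) (hσt : npSlope xs ys t ≤ κ)
    (hF0 : F.coeff 0 ≠ 0 → npSlope xs ys t < nuQ p (F.coeff 0)) (hs : s ≤ t)
    (hi : i ≠ g.natDegree - xs s) :
    g.coeff i * (F ^ i).coeff ((g.natDegree - xs s) * F.natDegree) ∈ nuGe p (ys s + 1) := by
  have hxs := hg.xs_le_natDegree hs
  rcases lt_or_gt_of_ne hi with hlt | hgt
  · have hdeg : (F ^ i).natDegree < (g.natDegree - xs s) * F.natDegree := by
      rw [natDegree_pow]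
      exact Nat.mul_lt_mul_of_pos_right hlt hF
    rw [coeff_eq_zero_of_natDegree_lt hdeg, mul_zero]
    exact zero_mem _
  intro hne
  obtain ⟨hb, hc⟩ := mul_ne_zero_iff.mp hne
  have hs1 : 1 ≤ s := by
    by_contra! h0
    obtain rfl : s = 0 := by omega
    exact hb (coeff_eq_zero_of_natDegree_lt (by rw [hg.2.1] at hgt; omega))
  have hgi : ys s - npSlope xs ys s * (i - (g.natDegree - xs s : ℕ)) ≤ nuQ p (g.coeff i) := by
    have := hg.mem_weightedNuGe ⟨hs1, hs⟩ i hb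
    rw [npLine_eq (hg.strictMonoOn_xs.injOn.ne (by simp; omega) (by simpa using hs) (by omega))]
      at this
    rw [Nat.cast_sub hxs]
    linarith
  have hFi : npSlope xs ys s * (i - (g.natDegree - xs s : ℕ)) <
      nuQ p ((F ^ i).coeff ((g.natDegree - xs s) * F.natDegree)) := by
    rcases hs.lt_or_eq with hst | rfl
    · refine lt_nuQ_coeff_pow_of_lt hF hFW ?_ hgt hc
      exact (hg.strictMonoOn_npSlope ⟨hs1, hst.le⟩ ⟨hs1.trans hst.le, le_rfl⟩ hst).trans_le hσt
    · simp only [hg.2.2.1, Nat.sub_self, zero_mul, Nat.cast_zero, sub_zero] at hc hgt ⊢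
      exact lt_nuQ_coeff_zero_pow hF0 hgt hc
  rw [← (hg.2.2.2.2.1 s hs).2] at hgi ⊢
  apply nuQ_add_one_le_of_lt
  rw [nuQ_mul hb hc]
  linarith

lemma coeff_comp_vertex (hg : HasNPVertices p g t xs ys) (hF : 0 < F.natDegree)
    (hlc : nuQ p F.leadingCoeff = 0) (hFW : F ∈ weightedNuGe p (κ / F.natDegree) κ)
    (hσt : npSlope xs ys t ≤ κ) (hF0 : F.coeff 0 ≠ 0 → npSlope xs ys t < nuQ p (F.coeff 0))
    (hs : s ≤ t) :
    (g.comp F).coeff ((g.natDegree - xs s) * F.natDegree) ≠ 0 ∧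
      nuQ p ((g.comp F).coeff ((g.natDegree - xs s) * F.natDegree)) = ys s := by
  obtain ⟨hbm, hνm⟩ := hg.2.2.2.2.1 s hs
  have hlc0 : F.leadingCoeff ≠ 0 := leadingCoeff_ne_zero.mpr (ne_zero_of_natDegree_gt hF)
  have hx : g.coeff (g.natDegree - xs s) * F.leadingCoeff ^ (g.natDegree - xs s) ≠ 0 :=
    mul_ne_zero hbm (pow_ne_zero _ hlc0)
  have hνx : nuQ p (g.coeff (g.natDegree - xs s) * F.leadingCoeff ^ (g.natDegree - xs s)) =
      ys s := by
    rw [nuQ_mul hbm (pow_ne_zero _ hlc0), nuQ_pow, hlc, mul_zero, add_zero, hνm]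
  rw [comp_eq_sum_left, Polynomial.sum_def, finsetSum_coeff,
    ← Finset.add_sum_erase _ _ (mem_support_iff.mpr hbm), coeff_C_mul,
    coeff_pow_of_natDegree_le le_rfl]
  simp only [coeff_C_mul]
  obtain ⟨hne, hν⟩ := add_ne_zero_and_nuQ_add_eq hx (hνx ▸ sum_mem fun i hi =>
    coeff_mul_coeff_pow_mem_nuGe hg hF hFW hσt hF0 hs (Finset.ne_of_mem_erase hi))
  exact ⟨hne, hν.trans hνx⟩

theorem comp (hg : HasNPVertices p g t xs ys) (hF : 0 < F.natDegree)
    (hlc : nuQ p F.leadingCoeff = 0) (hFW : F ∈ weightedNuGe p (κ / F.natDegree) κ)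
    (hσt : npSlope xs ys t ≤ κ) (hF0 : F.coeff 0 ≠ 0 → npSlope xs ys t < nuQ p (F.coeff 0)) :
    HasNPVertices p (g.comp F) t (fun s => F.natDegree * xs s) ys := by
  obtain ⟨-, hx0, hxt, hx, -, hσ, -⟩ := id hg
  have hdeg : (g.comp F).natDegree = F.natDegree * g.natDegree := by
    rw [natDegree_comp, mul_comm]
  have hvertex (s : ℕ) (hs : s ≤ t) := hg.coeff_comp_vertex hF hlc hFW hσt hF0 hs
  refine hasNPVertices_of_mem_weightedNuGe ?_ (by simp [hx0]) (by simp [hxt, hdeg])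
    (fun s hs => Nat.mul_lt_mul_of_pos_left (hx s hs) hF) (fun s hs => ?_) (fun s hs1 hst => ?_)
    (fun s hs1 hst => ?_)
  · simpa [hxt] using (hvertex t le_rfl).1
  · rw [hdeg, ← Nat.mul_sub, mul_comm]
    exact hvertex s hs
  · rw [npSlope_mul, npSlope_mul]
    exact (div_lt_div_iff_of_pos_right (by exact_mod_cast hF)).mpr (hσ s hs1 hst)
  · have hD : (F.natDegree : ℚ) ≠ 0 := by exact_mod_cast hF.ne'
    have hσκ : npSlope xs ys s ≤ κ := (hg.strictMonoOn_npSlope.monotoneOn ⟨hs1, hst⟩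
      ⟨hs1.trans hst, le_rfl⟩ hst).trans hσt
    have hFσ := mem_weightedNuGe_of_le le_rfl (by rwa [div_mul_cancel₀ _ hD])
      (div_le_div_of_nonneg_right hσκ (Nat.cast_nonneg F.natDegree))
    rw [div_mul_cancel₀ _ hD] at hFσ
    rw [npSlope_mul, hdeg, Nat.cast_mul, npLine_mul hF.ne']
    exact comp_mem_weightedNuGe hFσ (hg.mem_weightedNuGe ⟨hs1, hst⟩)

end HasNPVertices

end Composition
theorem newton_polygon_comp_iterate_general
    (p : ℕ) (hp : p.Prime)
    (g f : Polynomial ℚ) (e d t : ℕ) (m : ℕ → ℕ)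
    (hge : g.natDegree = e) (he1 : 1 ≤ e)
    (hbe : padicValRat p (g.coeff e) = 0)
    (hbi : ∀ i, i < e → g.coeff i ≠ 0 → 1 ≤ padicValRat p (g.coeff i))
    (hNPg : HasNPVertices p g t (fun s => e - m s) (fun s => nuQ p (g.coeff (m s))))
    (hfd : f.natDegree = d) (hd1 : 1 ≤ d)
    (had : padicValRat p (f.coeff d) = 0)
    (lam : ℚ)
    (hlam : IsLeast {q : ℚ | ∃ i, i < d ∧ f.coeff i ≠ 0 ∧
      q = nuQ p (f.coeff i) / ((d : ℚ) - (i : ℚ))} lam)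
    (lam1 : ℚ)
    (hlam1 : lam1 = nuQ p (g.coeff (m 1)) / ((e : ℚ) - (m 1 : ℚ)))
    (hlamge : lam1 ≤ lam)
    (hcase :
      nuQ p (g.coeff 0) < lam1 * ((d : ℚ) + (e : ℚ) - 1) ∨
      (nuQ p (g.coeff 0) = lam1 * ((d : ℚ) + (e : ℚ) - 1) ∧
        (f.eval 0 = 0 ∨ (d : ℚ) * lam < nuQ p (f.eval 0) ∨ lam1 < lam))) :
    ∀ n : ℕ, 1 ≤ n →
      HasNPVertices p (g.comp (polyIter f n)) t
        (fun s => d ^ n * (e - m s)) (fun s => nuQ p (g.coeff (m s))) := by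
  have : Fact p.Prime := ⟨hp⟩
  subst hge hfd
  intro n _
  set xs : ℕ → ℕ := fun s => g.natDegree - m s
  set ys : ℕ → ℚ := fun s => nuQ p (g.coeff (m s))
  have ht : 1 ≤ t := Nat.one_le_iff_ne_zero.mpr fun h => by
    subst h; have := hNPg.2.2.1; simp only [hNPg.2.1] at this; omega
  have hgl : nuQ p g.leadingCoeff = 0 := by rw [nuQ, leadingCoeff, hbe, Int.cast_zero]
  have hfl : nuQ p f.leadingCoeff = 0 := by rw [nuQ, leadingCoeff, had, Int.cast_zero]
  have hσ₁ : npSlope xs ys 1 = lam1 := by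
    have hm1 : m 1 < g.natDegree := by
      have := hNPg.2.2.2.1 0 ht
      simp only [xs, zero_add] at this
      omega
    simp only [npSlope, Nat.sub_self, hNPg.ys_zero, hgl, hNPg.2.1, hlam1, xs, ys,
      Nat.cast_sub hm1.le]
    simp
  rw [← hσ₁, ← coeff_zero_eq_eval_zero, mul_comm (f.natDegree : ℚ)] at hcase
  rw [← hσ₁] at hlamge
  have hσ₁_pos := hNPg.npSlope_one_pos ht hgl fun i hi hc => by
    simpa [nuQ] using zero_lt_one.trans_le (hbi i hi hc)
  have hlam0 : 0 ≤ lam := (hσ₁_pos.trans_le hlamge).le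
  have hd : (1 : ℚ) ≤ f.natDegree := by exact_mod_cast hd1
  have hfW : f ∈ weightedNuGe p lam (lam * f.natDegree) :=
    mem_weightedNuGe_of_le_div hfl fun i hi hc => hlam.2 ⟨i, hi, hc, rfl⟩
  have hσt := hNPg.npSlope_last_le ht hgl hσ₁_pos.le hd (hcase.elim le_of_lt fun h => h.1.le)
  have hσ₁_le : npSlope xs ys 1 * f.natDegree ≤ lam * f.natDegree :=
    mul_le_mul_of_nonneg_right hlamge (zero_le_one.trans hd)
  have hF0 := lt_nuQ_coeff_zero_polyIter hd1 hlam0 hfW (σ := npSlope xs ys t) (by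
    rcases hcase with hlt | ⟨-, hf0 | hf0 | hlt⟩
    · exact Or.inl ((hNPg.npSlope_last_lt ht hgl hσ₁_pos.le hd hlt).trans_le hσ₁_le)
    · exact Or.inr ⟨hσt.trans hσ₁_le, Or.inl hf0⟩
    · exact Or.inr ⟨hσt.trans hσ₁_le, Or.inr hf0⟩
    · exact Or.inl (hσt.trans_lt (mul_lt_mul_of_pos_right hlt (zero_lt_one.trans_le hd)))) n
  simpa only [natDegree_polyIter] using
    hNPg.comp (by rw [natDegree_polyIter]; exact pow_pos hd1 n)
      (nuQ_leadingCoeff_polyIter hd1 hfl n) (polyIter_mem_weightedNuGe_div hd1 hlam0 hfW n)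
      (hσt.trans hσ₁_le) hF0

/-- Theorem 1.2 (main thm 1): stretching of the Newton polygon under
composition with iterates. -/
theorem newton_polygon_comp_iterate
    (p : ℕ) (hp : p.Prime)
    (g f : Polynomial ℚ) (e d t : ℕ) (m : ℕ → ℕ)
    (hge : g.natDegree = e) (he1 : 1 ≤ e)
    (hb0 : g.coeff 0 ≠ 0)
    (hbe : padicValRat p (g.coeff e) = 0)
    (hbi : ∀ i, i < e → g.coeff i ≠ 0 → 1 ≤ padicValRat p (g.coeff i))
    (hm0 : m 0 = e) (hmt : m t = 0)
    (hmdec : ∀ s, s < t → m (s + 1) < m s)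
    (hNPg : HasNPVertices p g t (fun s => e - m s) (fun s => nuQ p (g.coeff (m s))))
    (hfd : f.natDegree = d) (hd1 : 1 ≤ d)
    (had : padicValRat p (f.coeff d) = 0)
    (lam : ℚ)
    (hlam : IsLeast {q : ℚ | ∃ i, i < d ∧ f.coeff i ≠ 0 ∧
      q = nuQ p (f.coeff i) / ((d : ℚ) - (i : ℚ))} lam)
    (lam1 : ℚ)
    (hlam1 : lam1 = nuQ p (g.coeff (m 1)) / ((e : ℚ) - (m 1 : ℚ)))
    (hlamge : lam1 ≤ lam)
    (hcase :
      nuQ p (g.coeff 0) < lam1 * ((d : ℚ) + (e : ℚ) - 1) ∨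
      (nuQ p (g.coeff 0) = lam1 * ((d : ℚ) + (e : ℚ) - 1) ∧
        (f.eval 0 = 0 ∨ (d : ℚ) * lam < nuQ p (f.eval 0) ∨ lam1 < lam))) :
    ∀ n : ℕ, 1 ≤ n →
      HasNPVertices p (g.comp (polyIter f n)) t
        (fun s => d ^ n * (e - m s)) (fun s => nuQ p (g.coeff (m s))) :=
  newton_polygon_comp_iterate_general p hp g f e d t m hge he1 hbe hbi hNPg hfd hd1 had lam hlam
    lam1 hlam1 hlamge hcase
end

section
/- Let p be a prime, r ≥ 1 an integer, and suppose f(x) ∈ ℚ[x] is a p^r-pure polynomial of degree d ≥ 1. Then for every integer n ≥ 1, the n-th iterate f^n(x) has at most gcd(d^n, r) irreducible factors over ℚ (counted with multiplicity), and each irreducible factor of f^n over ℚ has degree at least d^n / gcd(d^n, r). -/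
open Polynomial

section PureAuxSection
set_option linter.unusedSectionVars false

namespace PureAux

variable {p : ℕ} [hp : Fact p.Prime]

theorem val_add_eq {x y : ℚ} (hx : x ≠ 0)
    (h : y ≠ 0 → padicValRat p x < padicValRat p y) :
    x + y ≠ 0 ∧ padicValRat p (x + y) = padicValRat p x := by
  by_cases hy : y = 0
  · simp [hy, hx]
  · have hlt := h hy
    have hxy : x + y ≠ 0 := by
      intro h0
      have : y = -x := by linarith [h0]
      rw [this, padicValRat.neg] at hlt
      exact lt_irrefl _ hlt
    refine ⟨hxy, ?_⟩
    rw [padicValRat.add_eq_min hxy hx hy (ne_of_lt hlt), min_eq_left (le_of_lt hlt)]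

theorem exists_val_le_sum {ι : Type*} [DecidableEq ι] (s : Finset ι) (F : ι → ℚ)
    (hs : ∑ i ∈ s, F i ≠ 0) :
    ∃ i ∈ s, F i ≠ 0 ∧ padicValRat p (F i) ≤ padicValRat p (∑ i ∈ s, F i) := by
  induction s using Finset.induction_on with
  | empty => simp at hs
  | @insert a s ha ih =>

    rw [Finset.sum_insert ha] at hs ⊢
    by_cases hFa : F a = 0
    · rw [hFa, zero_add] at hs ⊢
      obtain ⟨i, his, h1, h2⟩ := ih hs
      exact ⟨i, Finset.mem_insert_of_mem his, h1, h2⟩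
    · by_cases hT : ∑ i ∈ s, F i = 0
      · rw [hT, add_zero]
        exact ⟨a, Finset.mem_insert_self _ _, hFa, le_refl _⟩
      · have hmin := padicValRat.min_le_padicValRat_add (p := p) hs
        rcases le_total (padicValRat p (F a)) (padicValRat p (∑ i ∈ s, F i)) with hle | hle
        · exact ⟨a, Finset.mem_insert_self _ _, hFa,
            le_trans (le_min (le_refl _) hle) hmin⟩
        · obtain ⟨i, his, h1, h2⟩ := ih hT
          exact ⟨i, Finset.mem_insert_of_mem his, h1,
            le_trans (h2.trans (le_min hle (le_refl _))) hmin⟩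

theorem sum_dominant {ι : Type*} [DecidableEq ι] (s : Finset ι) (F : ι → ℚ) (a : ι)
    (has : a ∈ s) (hFa : F a ≠ 0)
    (hdom : ∀ i ∈ s, i ≠ a → F i ≠ 0 → padicValRat p (F a) < padicValRat p (F i)) :
    (∑ i ∈ s, F i) ≠ 0 ∧ padicValRat p (∑ i ∈ s, F i) = padicValRat p (F a) := by
  rw [← Finset.add_sum_erase s F has]
  apply val_add_eq hFa
  intro hT
  obtain ⟨i, his, h1, h2⟩ := exists_val_le_sum (p := p) _ F hT
  exact lt_of_lt_of_le (hdom i (Finset.mem_of_mem_erase his) (Finset.ne_of_mem_erase his) h1) h2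

end PureAux

namespace PureAux

variable {p : ℕ} [hp : Fact p.Prime]

/-- weighted valuation term -/
noncomputable def Wt (p D r : ℕ) (g : ℚ[X]) (i : ℕ) : ℤ :=
  (D : ℤ) * padicValRat p (g.coeff i) + (i : ℤ) * (r : ℤ)

/-- Gauss-type valuation with weights `D, r`. -/
noncomputable def W (p D r : ℕ) (g : ℚ[X]) : ℤ :=
  if hg : g = 0 then 0
  else g.support.inf' (Polynomial.support_nonempty.mpr hg) (Wt p D r g)

variable {D r : ℕ}

theorem W_le {g : ℚ[X]} {i : ℕ} (hi : g.coeff i ≠ 0) :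
    W p D r g ≤ Wt p D r g i := by
  have hg : g ≠ 0 := fun h => hi (by simp [h])
  rw [W, dif_neg hg]
  exact Finset.inf'_le _ (Polynomial.mem_support_iff.mpr hi)

theorem W_ge {g : ℚ[X]} (hg : g ≠ 0) {B : ℤ}
    (h : ∀ i, g.coeff i ≠ 0 → B ≤ Wt p D r g i) :
    B ≤ W p D r g := by
  rw [W, dif_neg hg]
  exact Finset.le_inf' _ _ fun i hi => h i (Polynomial.mem_support_iff.mp hi)

theorem W_exists {g : ℚ[X]} (hg : g ≠ 0) :
    ∃ i, g.coeff i ≠ 0 ∧ W p D r g = Wt p D r g i := by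
  rw [W, dif_neg hg]
  obtain ⟨i, hi, he⟩ :=
    Finset.exists_mem_eq_inf' (Polynomial.support_nonempty.mpr hg) (Wt p D r g)
  exact ⟨i, Polynomial.mem_support_iff.mp hi, he⟩

/-- a maximal index attaining the minimum -/
theorem W_exists_max {g : ℚ[X]} (hg : g ≠ 0) :
    ∃ i₀, g.coeff i₀ ≠ 0 ∧ W p D r g = Wt p D r g i₀ ∧
      ∀ i, g.coeff i ≠ 0 → i₀ < i → W p D r g < Wt p D r g i := by
  classical
  set A := g.support.filter (fun i => W p D r g = Wt p D r g i) with hA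
  have hAne : A.Nonempty := by
    obtain ⟨i, hi, he⟩ := W_exists (p := p) (D := D) (r := r) hg
    exact ⟨i, Finset.mem_filter.mpr ⟨Polynomial.mem_support_iff.mpr hi, he⟩⟩
  set i₀ := A.max' hAne with hi₀
  have hmem := Finset.mem_filter.mp (A.max'_mem hAne)
  refine ⟨i₀, Polynomial.mem_support_iff.mp hmem.1, hmem.2, ?_⟩
  intro i hi hlt
  rcases lt_or_eq_of_le (W_le (p := p) (D := D) (r := r) hi) with h | h
  · exact h
  · exfalso
    have : i ∈ A := Finset.mem_filter.mpr ⟨Polynomial.mem_support_iff.mpr hi, h⟩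
    exact absurd (Finset.le_max' A i this) (not_le.mpr hlt)

theorem W_mul (hD : 0 < D) {g h : ℚ[X]} (hg : g ≠ 0) (hh : h ≠ 0) :
    W p D r (g * h) = W p D r g + W p D r h := by
  classical
  have hgh : g * h ≠ 0 := mul_ne_zero hg hh
  obtain ⟨i₀, hgi₀, hWg, hmaxg⟩ := W_exists_max (p := p) (D := D) (r := r) hg
  obtain ⟨j₀, hhj₀, hWh, hmaxh⟩ := W_exists_max (p := p) (D := D) (r := r) hh
  have hD' : (0 : ℤ) < (D : ℤ) := by exact_mod_cast hD
  refine le_antisymm ?_ ?_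
  · -- upper bound via dominant coefficient at i₀ + j₀
    have hcm : (g * h).coeff (i₀ + j₀) =
        ∑ x ∈ Finset.HasAntidiagonal.antidiagonal (i₀ + j₀), g.coeff x.1 * h.coeff x.2 :=
      Polynomial.coeff_mul g h (i₀ + j₀)
    have hdom := sum_dominant (p := p) (Finset.HasAntidiagonal.antidiagonal (i₀ + j₀))
      (fun x => g.coeff x.1 * h.coeff x.2) (i₀, j₀)
      (Finset.HasAntidiagonal.mem_antidiagonal.mpr rfl) (mul_ne_zero hgi₀ hhj₀) ?_
    · have hne : (g * h).coeff (i₀ + j₀) ≠ 0 := by rw [hcm]; exact hdom.1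
      have hval : padicValRat p ((g * h).coeff (i₀ + j₀)) =
          padicValRat p (g.coeff i₀) + padicValRat p (h.coeff j₀) := by
        rw [hcm, hdom.2, padicValRat.mul hgi₀ hhj₀]
      calc W p D r (g * h) ≤ Wt p D r (g * h) (i₀ + j₀) := W_le hne
        _ = W p D r g + W p D r h := by
            rw [Wt, hval, hWg, hWh, Wt, Wt]; push_cast; ring
    · rintro ⟨i, j⟩ hmem hne hne0
      have hij : i + j = i₀ + j₀ := Finset.HasAntidiagonal.mem_antidiagonal.mp hmem
      have hgi : g.coeff i ≠ 0 := fun h0 => hne0 (by simp [h0])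
      have hhj : h.coeff j ≠ 0 := fun h0 => hne0 (by simp [h0])
      have hni : i ≠ i₀ := by
        rintro rfl
        exact hne (by simp [Prod.ext_iff]; omega)
      rw [padicValRat.mul hgi₀ hhj₀, padicValRat.mul hgi hhj]
      have key : W p D r g + W p D r h < Wt p D r g i + Wt p D r h j := by
        rcases lt_or_gt_of_ne hni with hlt | hlt
        · have h1 : W p D r g ≤ Wt p D r g i := W_le hgi
          have h2 : W p D r h < Wt p D r h j := hmaxh j hhj (by omega)
          omega
        · have h1 : W p D r g < Wt p D r g i := hmaxg i hgi hlt
          have h2 : W p D r h ≤ Wt p D r h j := W_le hhj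
          omega
      rw [hWg, hWh] at key
      simp only [Wt] at key
      have hcast : ((i : ℤ) + j) * r = ((i₀ : ℤ) + j₀) * r := by
        have : ((i : ℤ) + j) = ((i₀ : ℤ) + j₀) := by exact_mod_cast hij
        rw [this]
      nlinarith [key, hcast]
  · -- lower bound
    apply W_ge hgh
    intro k hk
    rw [Polynomial.coeff_mul] at hk
    obtain ⟨⟨i, j⟩, hmem, hne0, hle⟩ :=
      exists_val_le_sum (p := p) (Finset.HasAntidiagonal.antidiagonal k)
        (fun x => g.coeff x.1 * h.coeff x.2) hk
    have hij : i + j = k := Finset.HasAntidiagonal.mem_antidiagonal.mp hmem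
    have hgi : g.coeff i ≠ 0 := fun h0 => hne0 (by simp [h0])
    have hhj : h.coeff j ≠ 0 := fun h0 => hne0 (by simp [h0])
    have h1 : W p D r g ≤ Wt p D r g i := W_le hgi
    have h2 : W p D r h ≤ Wt p D r h j := W_le hhj
    rw [padicValRat.mul hgi hhj] at hle
    simp only [Wt] at h1 h2 ⊢
    rw [Polynomial.coeff_mul]
    have hmul : (D : ℤ) * (padicValRat p (g.coeff i) + padicValRat p (h.coeff j)) ≤
        (D : ℤ) * padicValRat p (∑ x ∈ Finset.HasAntidiagonal.antidiagonal k, g.coeff x.1 * h.coeff x.2) :=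
      mul_le_mul_of_nonneg_left hle (by positivity)
    have hk' : ((i : ℤ) + j) = (k : ℤ) := by exact_mod_cast hij
    nlinarith [h1, h2, hmul, hk']

theorem W_pow (hD : 0 < D) {g : ℚ[X]} (hg : g ≠ 0) (j : ℕ) :
    W p D r (g ^ j) = (j : ℤ) * W p D r g := by
  induction j with
  | zero =>
    simp only [pow_zero, Nat.cast_zero, zero_mul]
    refine le_antisymm ?_ ?_
    · have h1 : (1 : ℚ[X]).coeff 0 ≠ 0 := by simp
      have := W_le (p := p) (D := D) (r := r) h1
      simpa [Wt, padicValRat.one] using this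
    · apply W_ge one_ne_zero
      intro i hi
      have : i = 0 := by
        by_contra hne
        simp [Polynomial.coeff_one, hne] at hi
      simp [this, Wt, padicValRat.one]
  | succ j ih =>
    rw [pow_succ, W_mul hD (pow_ne_zero _ hg) hg, ih]
    push_cast; ring

end PureAux

namespace PureAux

variable {p : ℕ} [hp : Fact p.Prime] {r : ℕ}

/-- Convenient integer form of `p^r`-purity. -/
def Pure (p r D : ℕ) (h : ℚ[X]) : Prop :=
  h.natDegree = D ∧ h.coeff 0 ≠ 0 ∧
  padicValRat p h.leadingCoeff = 0 ∧
  padicValRat p (h.coeff 0) = (r : ℤ) ∧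
  ∀ i, i ≤ D → h.coeff i ≠ 0 →
    ((D : ℤ) - (i : ℤ)) * (r : ℤ) ≤ (D : ℤ) * padicValRat p (h.coeff i)

theorem Pure.ne_zero {D : ℕ} {h : ℚ[X]} (hh : Pure p r D h) : h ≠ 0 :=
  fun h0 => hh.2.1 (by simp [h0])

theorem pure_of_isPpure {f : Polynomial ℚ} {d : ℕ} (hfd : f.natDegree = d)
    (hpure : IsPpure p r f) : Pure p r d f := by
  obtain ⟨h0, hlead, hconst, hmid⟩ := hpure
  refine ⟨hfd, h0, hlead, hconst, ?_⟩
  intro i hi hci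
  rcases Nat.eq_or_lt_of_le hi with rfl | hid
  · simp [hlead, ← hfd, Polynomial.coeff_natDegree]
  rcases Nat.eq_zero_or_pos i with rfl | hipos
  · rw [hconst]; push_cast; ring_nf; omega
  · have := hmid i hipos (by omega) hci
    rw [hfd] at this
    have hd0 : (0 : ℚ) < (d : ℚ) := by exact_mod_cast Nat.pos_of_ne_zero (by omega)
    have hdi : (0 : ℚ) < (d : ℚ) - (i : ℚ) := by
      have : (i : ℚ) < (d : ℚ) := by exact_mod_cast hid
      linarith
    rw [div_le_div_iff₀ hd0 hdi] at this
    unfold nuQ at this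
    have : ((r : ℤ) : ℚ) * (((d : ℤ) : ℚ) - ((i : ℤ) : ℚ)) ≤
        ((padicValRat p (f.coeff i) : ℤ) : ℚ) * ((d : ℤ) : ℚ) := by push_cast at this ⊢; linarith
    have h2 : (r : ℤ) * ((d : ℤ) - (i : ℤ)) ≤ padicValRat p (f.coeff i) * (d : ℤ) := by
      exact_mod_cast this
    linarith

theorem pure_W {D : ℕ} {h : ℚ[X]} (hpure : Pure p r D h) :
    W p D r h = (D : ℤ) * (r : ℤ) := by
  obtain ⟨hdeg, h0, hlead, hconst, hmid⟩ := hpure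
  have hne : h ≠ 0 := fun h' => h0 (by simp [h'])
  refine le_antisymm ?_ ?_
  · have := W_le (p := p) (D := D) (r := r) h0
    simpa [Wt, hconst] using this
  · apply W_ge hne
    intro i hi
    have hiD : i ≤ D := hdeg ▸ Polynomial.le_natDegree_of_ne_zero hi
    have := hmid i hiD hi
    simp only [Wt]
    nlinarith [this]

/-- key divisibility for factors of pure polynomials -/
theorem pure_factor {D : ℕ} (hD : 0 < D) {h q s : ℚ[X]} (hpure : Pure p r D h)
    (hqs : h = q * s) : (D : ℤ) ∣ (q.natDegree : ℤ) * (r : ℤ) := by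
  have hne : h ≠ 0 := hpure.ne_zero
  have hq : q ≠ 0 := fun h0 => hne (by rw [hqs, h0, zero_mul])
  have hs : s ≠ 0 := fun h0 => hne (by rw [hqs, h0, mul_zero])
  obtain ⟨hdeg, h0, hlead, hconst, hmid⟩ := hpure
  have hq0 : q.coeff 0 ≠ 0 := fun h' => h0 (by rw [hqs, Polynomial.mul_coeff_zero, h', zero_mul])
  have hs0 : s.coeff 0 ≠ 0 := fun h' => h0 (by rw [hqs, Polynomial.mul_coeff_zero, h', mul_zero])
  have hlq : q.leadingCoeff ≠ 0 := Polynomial.leadingCoeff_ne_zero.mpr hq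
  have hls : s.leadingCoeff ≠ 0 := Polynomial.leadingCoeff_ne_zero.mpr hs
  have hν0 : padicValRat p (q.coeff 0) + padicValRat p (s.coeff 0) = (r : ℤ) := by
    rw [← padicValRat.mul hq0 hs0, ← Polynomial.mul_coeff_zero, ← hqs, hconst]
  have hνl : padicValRat p q.leadingCoeff + padicValRat p s.leadingCoeff = 0 := by
    rw [← padicValRat.mul hlq hls, ← Polynomial.leadingCoeff_mul, ← hqs, hlead]
  have hdd : q.natDegree + s.natDegree = D := by
    rw [← Polynomial.natDegree_mul hq hs, ← hqs, hdeg]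
  have hW : W p D r q + W p D r s = (D : ℤ) * (r : ℤ) := by
    rw [← W_mul hD hq hs, ← hqs, pure_W ⟨hdeg, h0, hlead, hconst, hmid⟩]
  have h1 : W p D r q ≤ (D : ℤ) * padicValRat p (q.coeff 0) := by
    simpa [Wt] using W_le (p := p) (D := D) (r := r) hq0
  have h2 : W p D r s ≤ (D : ℤ) * padicValRat p (s.coeff 0) := by
    simpa [Wt] using W_le (p := p) (D := D) (r := r) hs0
  have h3 : W p D r q ≤ (D : ℤ) * padicValRat p q.leadingCoeff +
      (q.natDegree : ℤ) * (r : ℤ) := by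
    have := W_le (p := p) (D := D) (r := r)
      (i := q.natDegree) (by rwa [Polynomial.coeff_natDegree])
    simpa [Wt, Polynomial.coeff_natDegree] using this
  have h4 : W p D r s ≤ (D : ℤ) * padicValRat p s.leadingCoeff +
      (s.natDegree : ℤ) * (r : ℤ) := by
    have := W_le (p := p) (D := D) (r := r)
      (i := s.natDegree) (by rwa [Polynomial.coeff_natDegree])
    simpa [Wt, Polynomial.coeff_natDegree] using this
  have hsum0 : (D : ℤ) * padicValRat p (q.coeff 0) + (D : ℤ) * padicValRat p (s.coeff 0)
      = (D : ℤ) * (r : ℤ) := by rw [← mul_add, hν0]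
  have hsuml : (D : ℤ) * padicValRat p q.leadingCoeff +
      (D : ℤ) * padicValRat p s.leadingCoeff = 0 := by rw [← mul_add, hνl, mul_zero]
  have hsumd : (q.natDegree : ℤ) + (s.natDegree : ℤ) = (D : ℤ) := by exact_mod_cast hdd
  have e1 : W p D r q = (D : ℤ) * padicValRat p (q.coeff 0) := by linarith
  have e2 : W p D r q = (D : ℤ) * padicValRat p q.leadingCoeff +
      (q.natDegree : ℤ) * (r : ℤ) := by nlinarith [h3, h4, hW, hsuml, hsumd]
  exact ⟨padicValRat p (q.coeff 0) - padicValRat p q.leadingCoeff, by linarith⟩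

end PureAux

namespace PureAux

variable {p : ℕ} [hp : Fact p.Prime] {r : ℕ}

theorem pure_W_scaled {d D' : ℕ} (hd : 1 ≤ d) {g : ℚ[X]} (hg : Pure p r D' g) :
    W p (d * D') r g = (D' : ℤ) * (r : ℤ) := by
  obtain ⟨hdeg, h0, hlead, hconst, hmid⟩ := hg
  have hne : g ≠ 0 := fun h' => h0 (by simp [h'])
  refine le_antisymm ?_ ?_
  · have hc : g.coeff g.natDegree ≠ 0 := by
      rw [Polynomial.coeff_natDegree]; exact Polynomial.leadingCoeff_ne_zero.mpr hne
    have := W_le (p := p) (D := d * D') (r := r) hc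
    rw [Wt, Polynomial.coeff_natDegree, hlead, mul_zero, zero_add, hdeg] at this
    exact this
  · apply W_ge hne
    intro i hi
    have hiD : i ≤ D' := hdeg ▸ Polynomial.le_natDegree_of_ne_zero hi
    have hA : (d : ℤ) * (((D' : ℤ) - i) * r) ≤
        (d : ℤ) * ((D' : ℤ) * padicValRat p (g.coeff i)) :=
      mul_le_mul_of_nonneg_left (hmid i hiD hi) (by positivity)
    have hB : (0 : ℤ) ≤ ((d : ℤ) - 1) * (((D' : ℤ) - i) * r) := by
      have h1 : (1 : ℤ) ≤ (d : ℤ) := by exact_mod_cast hd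
      have h2 : (i : ℤ) ≤ (D' : ℤ) := by exact_mod_cast hiD
      have h3 : (0:ℤ) ≤ (r:ℤ) := by positivity
      exact mul_nonneg (by linarith) (mul_nonneg (by linarith) h3)
    simp only [Wt]
    push_cast
    nlinarith [hA, hB]

theorem pure_comp (hr : 1 ≤ r) {d D' : ℕ} (hd : 2 ≤ d) (hD' : 1 ≤ D') {f g : ℚ[X]}
    (hf : Pure p r d f) (hgP : Pure p r D' g) : Pure p r (d * D') (f.comp g) := by
  obtain ⟨hfdeg, hf0, hflead, hfconst, hfmid⟩ := hf
  obtain ⟨hgdeg, hg0, hglead, hgconst, hgmid⟩ := hgP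
  have hfne : f ≠ 0 := fun h' => hf0 (by simp [h'])
  have hgne : g ≠ 0 := fun h' => hg0 (by simp [h'])
  have hDpos : 0 < d * D' := by positivity
  have heval : f.eval (g.coeff 0) ≠ 0 ∧ padicValRat p (f.eval (g.coeff 0)) = (r : ℤ) := by
    rw [Polynomial.eval_eq_sum_range]
    have hdom := sum_dominant (p := p) (Finset.range (f.natDegree + 1))
        (fun i => f.coeff i * (g.coeff 0) ^ i) 0 (Finset.mem_range.mpr (by omega))
        (by simpa using hf0) ?_
    · refine ⟨hdom.1, ?_⟩
      rw [hdom.2]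
      simpa using hfconst
    · intro j hj hjne hne0
      have hfj : f.coeff j ≠ 0 := fun h' => hne0 (by simp [h'])
      have hj1 : 1 ≤ j := Nat.pos_of_ne_zero hjne
      have hjd : j ≤ d := by
        have := Finset.mem_range.mp hj
        omega
      simp only [pow_zero, mul_one]
      rw [padicValRat.mul hfj (pow_ne_zero _ hg0), padicValRat.pow (g.coeff 0), hgconst, hfconst]
      have hm := hfmid j hjd hfj
      have hr' : (1 : ℤ) ≤ (r : ℤ) := by exact_mod_cast hr
      have hd' : (2 : ℤ) ≤ (d : ℤ) := by exact_mod_cast hd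
      have hj' : (1 : ℤ) ≤ (j : ℤ) := by exact_mod_cast hj1
      have hjd' : (j : ℤ) ≤ (d : ℤ) := by exact_mod_cast hjd
      have e0 : (1:ℤ) ≤ (j:ℤ) * r := by nlinarith
      have e1 : (1:ℤ) ≤ ((j:ℤ) * r) * ((d:ℤ) - 1) := by nlinarith
      have key : (d:ℤ) * (r:ℤ) < (d:ℤ) * (padicValRat p (f.coeff j) + (j:ℤ) * r) := by
        nlinarith [hm, e1]
      exact lt_of_mul_lt_mul_left key (by positivity)
  have hcomp0 : (f.comp g).coeff 0 = f.eval (g.coeff 0) := by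
    rw [Polynomial.coeff_zero_eq_eval_zero, Polynomial.eval_comp,
      ← Polynomial.coeff_zero_eq_eval_zero]
  refine ⟨?_, ?_, ?_, ?_, ?_⟩
  · rw [Polynomial.natDegree_comp, hfdeg, hgdeg]
  · rw [hcomp0]; exact heval.1
  · rw [Polynomial.leadingCoeff_comp (by rw [hgdeg]; omega)]
    rw [padicValRat.mul (Polynomial.leadingCoeff_ne_zero.mpr hfne)
      (pow_ne_zero _ (Polynomial.leadingCoeff_ne_zero.mpr hgne)),
      padicValRat.pow g.leadingCoeff, hflead, hglead]
    ring
  · rw [hcomp0]; exact heval.2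
  · intro i hiD hci
    have hcomp : ∀ k, (f.comp g).coeff k = ∑ j ∈ f.support, f.coeff j * ((g ^ j).coeff k) := by
      intro k
      rw [Polynomial.comp_eq_sum_left, Polynomial.sum_def, Polynomial.finset_sum_coeff]
      simp only [Polynomial.coeff_C_mul]
    rw [hcomp i] at hci
    obtain ⟨j, hjs, hne0, hle⟩ := exists_val_le_sum (p := p) _ _ hci
    have hfj : f.coeff j ≠ 0 := fun h' => hne0 (by simp [h'])
    have hgji : (g ^ j).coeff i ≠ 0 := fun h' => hne0 (by simp [h'])
    have hjd : j ≤ d := hfdeg ▸ Polynomial.le_natDegree_of_ne_zero hfj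
    have hWg : W p (d * D') r g = (D' : ℤ) * (r : ℤ) :=
      pure_W_scaled (by omega) ⟨hgdeg, hg0, hglead, hgconst, hgmid⟩
    have hWpow : W p (d * D') r (g ^ j) = (j : ℤ) * ((D' : ℤ) * (r : ℤ)) := by
      rw [W_pow hDpos hgne j, hWg]
    have hb1 : (j : ℤ) * ((D' : ℤ) * (r : ℤ)) ≤
        ((d : ℤ) * (D' : ℤ)) * padicValRat p ((g ^ j).coeff i) + (i : ℤ) * (r : ℤ) := by
      have := W_le (p := p) (D := d * D') (r := r) hgji
      rw [hWpow] at this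
      simp only [Wt] at this
      push_cast at this
      linarith
    have hb2 : (D' : ℤ) * (((d : ℤ) - (j : ℤ)) * (r : ℤ)) ≤
        (D' : ℤ) * ((d : ℤ) * padicValRat p (f.coeff j)) :=
      mul_le_mul_of_nonneg_left (hfmid j hjd hfj) (by positivity)
    rw [padicValRat.mul hfj hgji] at hle
    have hle' : ((d : ℤ) * (D' : ℤ)) *
          (padicValRat p (f.coeff j) + padicValRat p ((g ^ j).coeff i)) ≤
        ((d : ℤ) * (D' : ℤ)) * padicValRat p (∑ j ∈ f.support, f.coeff j * (g ^ j).coeff i) :=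
      mul_le_mul_of_nonneg_left hle (by positivity)
    rw [hcomp i]
    push_cast
    nlinarith [hb1, hb2, hle']

theorem pure_iter (hr : 1 ≤ r) {d : ℕ} (hd : 2 ≤ d) {f : ℚ[X]} (hf : Pure p r d f) :
    ∀ n, 1 ≤ n → Pure p r (d ^ n) (polyIter f n) := by
  intro n hn
  induction n with
  | zero => omega
  | succ m ih =>
    rcases Nat.eq_zero_or_pos m with rfl | hm
    · have h1 : polyIter f 1 = f := by
        show f.comp (polyIter f 0) = f
        show f.comp Polynomial.X = f
        exact Polynomial.comp_X
      rw [h1, pow_one]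
      exact ⟨hf.1, hf.2.1, hf.2.2.1, hf.2.2.2.1, hf.2.2.2.2⟩
    · have hP := ih hm
      have hcomp := pure_comp hr hd (Nat.one_le_pow _ _ (by omega)) 
        ⟨hf.1, hf.2.1, hf.2.2.1, hf.2.2.2.1, hf.2.2.2.2⟩ hP
      have heq : polyIter f (m + 1) = f.comp (polyIter f m) := rfl
      rw [heq, pow_succ]
      rwa [mul_comm] at hcomp

theorem natDegree_polyIter (f : ℚ[X]) (n : ℕ) :
    (polyIter f n).natDegree = f.natDegree ^ n := by
  induction n with
  | zero => simp [polyIter]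
  | succ m ih =>
    have heq : polyIter f (m + 1) = f.comp (polyIter f m) := rfl
    rw [heq, Polynomial.natDegree_comp, ih, pow_succ, mul_comm]

theorem count_factors {h : ℚ[X]} (hne : h ≠ 0) {m : ℕ}
    (hall : ∀ q ∈ UniqueFactorizationMonoid.factors h, m ≤ q.natDegree) :
    numFactors h * m ≤ h.natDegree := by
  classical
  obtain ⟨u, hu⟩ := UniqueFactorizationMonoid.factors_prod hne
  have hprodne : (UniqueFactorizationMonoid.factors h).prod ≠ 0 := by
    intro h0
    rw [h0, zero_mul] at hu
    exact hne hu.symm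
  have hdeg : (UniqueFactorizationMonoid.factors h).prod.natDegree = h.natDegree := by
    conv_rhs => rw [← hu]
    rw [Polynomial.natDegree_mul hprodne (Units.ne_zero u),
      Polynomial.natDegree_eq_zero_of_isUnit u.isUnit, add_zero]
  have hzero : (0 : ℚ[X]) ∉ UniqueFactorizationMonoid.factors h := fun h0 =>
    not_irreducible_zero (UniqueFactorizationMonoid.irreducible_of_factor _ h0)
  have hsum : ((UniqueFactorizationMonoid.factors h).map Polynomial.natDegree).sum
      = h.natDegree := by
    rw [← Polynomial.natDegree_multiset_prod _ hzero, hdeg]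
  have hcard := Multiset.card_nsmul_le_sum
    (s := (UniqueFactorizationMonoid.factors h).map Polynomial.natDegree) (a := m) ?_
  · rw [hsum, Multiset.card_map, smul_eq_mul] at hcard
    exact hcard
  · intro x hx
    obtain ⟨q, hq, rfl⟩ := Multiset.mem_map.mp hx
    exact hall q hq

end PureAux

end PureAuxSection

/-- Corollary 1.4: a `p^r`-pure polynomial of degree `d` has, for each `n ≥ 1`,
at most `gcd(d^n, r)` irreducible factors in its `n`-th iterate, each of degree
at least `d^n / gcd(d^n, r)`. -/
theorem pure_iterate_factors
    (p r : ℕ) (hp : p.Prime) (hr : 1 ≤ r)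
    (f : Polynomial ℚ) (d : ℕ) (hfd : f.natDegree = d) (hd1 : 1 ≤ d)
    (hpure : IsPpure p r f) :
    ∀ n : ℕ, 1 ≤ n →
      numFactors (polyIter f n) ≤ Nat.gcd (d ^ n) r ∧
      ∀ q : Polynomial ℚ, Irreducible q → q ∣ polyIter f n →
        d ^ n / Nat.gcd (d ^ n) r ≤ q.natDegree := by
  haveI : Fact p.Prime := ⟨hp⟩
  intro n hn
  set D := d ^ n with hD
  have hD1 : 1 ≤ D := Nat.one_le_pow _ _ (by omega)
  have hdegIter : (polyIter f n).natDegree = D := by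
    rw [PureAux.natDegree_polyIter, hfd]
  have hne : polyIter f n ≠ 0 := by
    intro h0
    rw [h0, Polynomial.natDegree_zero] at hdegIter
    omega
  have key : ∀ q : Polynomial ℚ, Irreducible q → q ∣ polyIter f n → D ∣ q.natDegree * r := by
    rcases eq_or_lt_of_le hd1 with hd1' | hd2
    · intro q _ _
      have : D = 1 := by rw [hD, ← hd1']; simp
      rw [this]; exact one_dvd _
    · intro q hq hdvd
      have hfP : PureAux.Pure p r d f := PureAux.pure_of_isPpure hfd hpure
      have hP : PureAux.Pure p r D (polyIter f n) := PureAux.pure_iter hr hd2 hfP n hn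
      obtain ⟨s, hs⟩ := hdvd
      have hdint : (D : ℤ) ∣ (q.natDegree : ℤ) * (r : ℤ) :=
        PureAux.pure_factor (by omega) hP hs
      have : (D : ℤ) ∣ ((q.natDegree * r : ℕ) : ℤ) := by push_cast; exact hdint
      exact_mod_cast this
  set g := Nat.gcd D r with hg
  have hgpos : 0 < g := Nat.gcd_pos_of_pos_right _ (by omega)
  have hgdvd : g ∣ D := Nat.gcd_dvd_left _ _
  set m := D / g with hm
  have hDm : D = g * m := (Nat.mul_div_cancel' hgdvd).symm
  have hm1 : 1  ≤ m := by
    rcases Nat.eq_zero_or_pos m with h0 | h1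
    · rw [h0, mul_zero] at hDm; omega
    · exact h1
  have hqm : ∀ q : Polynomial ℚ, Irreducible q → q ∣ polyIter f n → m ≤ q.natDegree := by
    intro q hq hdvd
    have h1 : D ∣ q.natDegree * r := key q hq hdvd
    have hco : Nat.Coprime m (r / g) := Nat.coprime_div_gcd_div_gcd hgpos
    have h2 : m ∣ q.natDegree * (r / g) := by
      obtain ⟨c, hc⟩ := h1
      have hrg : r = g * (r / g) := (Nat.mul_div_cancel' (Nat.gcd_dvd_right _ _)).symm
      refine ⟨c, ?_⟩
      have : q.natDegree * r = D * c := hc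
      rw [hrg, hDm] at this
      have h3 : g * (q.natDegree * (r / g)) = g * (m * c) := by
        calc g * (q.natDegree * (r / g)) = q.natDegree * (g * (r / g)) := by ring
        _ = g * m * c := this
        _ = g * (m * c) := by ring
      exact Nat.eq_of_mul_eq_mul_left hgpos h3
    have h4 : m ∣ q.natDegree := hco.dvd_of_dvd_mul_right h2
    exact Nat.le_of_dvd hq.natDegree_pos h4
  constructor
  · have hcount := PureAux.count_factors hne (m := m) (fun q hqf =>
      hqm q (UniqueFactorizationMonoid.irreducible_of_factor q hqf)
        (UniqueFactorizationMonoid.dvd_of_mem_factors hqf))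
    rw [hdegIter, hDm] at hcount
    exact Nat.le_of_mul_le_mul_right hcount hm1
  · exact hqm
end
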